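/- Consider a path of n+1 vertices with a single leak at interior vertex λ, where the head loss on each edge past the leak uses a strictly smaller friction term than the corresponding no-leak prediction. Formally: if H_j^* = H_i - l_{ij} U_{ij}^* - M_{ij}^* and H_j = H_i' - l_{ij} U_{ij} - M_{ij} with H_i' ≥ H_i^* (with strict inequality at the leak edge or U_{ij}^* > U_{ij} there), and downstream of the leak U_{ij} ≤ U_{ij}^* and M_{ij} ≤ M_{ij}^*, then by induction along the path the true pressure strictly exceeds the apparent pressure at every vertex strictly past the leak: H_j > H_j^*. -/

import Mathlib

/-!
Write `H j - Hstar j` for the gap between true and apparent pressure. Subtracting the two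
head-loss recursions gives
`gap (j+1) = gap j + l j * (Ustar j - U j) + (Mstar j - M j)`,
so downstream of the leak the gap never decreases, and on the leak edge it becomes strictly
positive because `l lam * (Ustar lam - U lam) > 0`.
-/

section PressureGap

variable {H Hstar l U Ustar M Mstar : ℕ → ℝ}

lemma pressure_gap_succ (hstar_rec : ∀ j, Hstar (j + 1) = Hstar j - l j * Ustar j - Mstar j)
    (h_rec : ∀ j, H (j + 1) = H j - l j * U j - M j) (j : ℕ) :
    H (j + 1) - Hstar (j + 1) = H j - Hstar j + l j * (Ustar j - U j) + (Mstar j - M j) := by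
  rw [hstar_rec, h_rec]
  ring

lemma pressure_gap_le_succ (hstar_rec : ∀ j, Hstar (j + 1) = Hstar j - l j * Ustar j - Mstar j)
    (h_rec : ∀ j, H (j + 1) = H j - l j * U j - M j) {j : ℕ}
    (hl : 0 ≤ l j) (hU : U j ≤ Ustar j) (hM : M j ≤ Mstar j) :
    H j - Hstar j ≤ H (j + 1) - Hstar (j + 1) := by
  rw [pressure_gap_succ hstar_rec h_rec]
  have : 0 ≤ l j * (Ustar j - U j) := mul_nonneg hl (sub_nonneg.2 hU)
  linarith

lemma pressure_gap_succ_pos (hstar_rec : ∀ j, Hstar (j + 1) = Hstar j - l j * Ustar j - Mstar j)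
    (h_rec : ∀ j, H (j + 1) = H j - l j * U j - M j) {j : ℕ}
    (hinit : Hstar j ≤ H j) (hl : 0 < l j) (hU : U j < Ustar j) (hM : M j ≤ Mstar j) :
    0 < H (j + 1) - Hstar (j + 1) := by
  rw [pressure_gap_succ hstar_rec h_rec]
  have : 0 < l j * (Ustar j - U j) := mul_pos hl (sub_pos.2 hU)
  linarith

end PressureGap

/-- Along a path with a single leak at interior vertex `lam`, the true pressure
strictly exceeds the apparent (no-leak) pressure at every vertex strictly past the
leak. -/
theorem stmt_19 (n lam : ℕ) (hlam : lam < n)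
    (H Hstar l U Ustar M Mstar : ℕ → ℝ)
    (hstar_rec : ∀ j, Hstar (j + 1) = Hstar j - l j * Ustar j - Mstar j)
    (h_rec : ∀ j, H (j + 1) = H j - l j * U j - M j)
    (hinit : Hstar lam ≤ H lam)
    (hl : ∀ j, lam ≤ j → j < n → 0 ≤ l j)
    (hU : ∀ j, lam ≤ j → j < n → U j ≤ Ustar j)
    (hM : ∀ j, lam ≤ j → j < n → M j ≤ Mstar j)
    (hleak : U lam < Ustar lam) (hllam : 0 < l lam) :
    ∀ j, lam < j → j ≤ n → Hstar j < H j := by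
  intro j hlam_j
  induction j, hlam_j using Nat.le_induction with
  | base =>
    intro _
    exact sub_pos.1 (pressure_gap_succ_pos hstar_rec h_rec hinit hllam hleak (hM lam le_rfl hlam))
  | succ k hk ih =>
    intro hkn
    have hk_lt : k < n := by omega
    have hlam_k : lam ≤ k := by omega
    have hstep := pressure_gap_le_succ hstar_rec h_rec (hl k hlam_k hk_lt) (hU k hlam_k hk_lt)
      (hM k hlam_k hk_lt)
    linarith [ih hk_lt.le]
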